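/- Let g = (a,b,c) ∈ ℝ³ and let L_g : ℝ³ → ℝ³ be given by L_g(x,y,z) = (a + e^c·x, b + e^{-c}·y, c + z). Identify the cotangent bundle T*ℝ³ with ℝ³ × (ℝ³ → ℝ)* and let the cotangent lift of L_g send (q,p) to (L_g(q), p ∘ (D L_g(q))⁻¹), where D L_g(q) is the Fréchet derivative of L_g at q. Then the functions M_x(q,p) = e^{z}·p(e₁), M_y(q,p) = e^{-z}·p(e₂), M_z(q,p) = p(e₃) — where z is the third coordinate of q and e₁, e₂, e₃ is the standard basis of ℝ³ — are invariant under the cotangent lift of L_g: M_x(L_g(q), p ∘ (D L_g(q))⁻¹) = M_x(q,p), and likewise for M_y and M_z. -/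

import Mathlib

/-- The function `M_x(q,p) = e^z · p(e₁)`, where `z` is the third coordinate of `q`. -/
noncomputable def Mx (q : ℝ × ℝ × ℝ) (p : (ℝ × ℝ × ℝ) →L[ℝ] ℝ) : ℝ :=
  Real.exp q.2.2 * p ((1 : ℝ), (0 : ℝ), (0 : ℝ))

/-- The function `M_y(q,p) = e^{-z} · p(e₂)`, where `z` is the third coordinate of `q`. -/
noncomputable def My (q : ℝ × ℝ × ℝ) (p : (ℝ × ℝ × ℝ) →L[ℝ] ℝ) : ℝ :=
  Real.exp (-q.2.2) * p ((0 : ℝ), (1 : ℝ), (0 : ℝ))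

/-- The function `M_z(q,p) = p(e₃)`. -/
noncomputable def Mz (_q : ℝ × ℝ × ℝ) (p : (ℝ × ℝ × ℝ) →L[ℝ] ℝ) : ℝ :=
  p ((0 : ℝ), (0 : ℝ), (1 : ℝ))

/-! The momenta are invariant because `D L_g` is diagonal in `e₁, e₂, e₃` with eigenvalues
`e^c, e^{-c}, 1`, so pulling `p` back by its inverse rescales `p(eᵢ)` by `e^{-c}, e^c, 1`,
exactly compensating the change `z ↦ c + z` of the weights `e^z, e^{-z}, 1`. -/

theorem Function.LeftInverse.eq_inv_smul_of_apply_eq_smul {K M F : Type*} [DivisionRing K]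
    [AddCommMonoid M] [Module K M] [FunLike F M M] [LinearMapClass F K M M] {A : F} {B : M → M}
    (hBA : Function.LeftInverse B A) {t : K} (ht : t ≠ 0) {v : M} (hv : A v = t • v) :
    B v = t⁻¹ • v :=
  calc B v = B (A (t⁻¹ • v)) := by rw [map_smul, hv, inv_smul_smul₀ ht]
    _ = t⁻¹ • v := hBA _

open Real

noncomputable def solTranslationDeriv (c : ℝ) : (ℝ × ℝ × ℝ) →L[ℝ] (ℝ × ℝ × ℝ) :=
  (exp c • ContinuousLinearMap.id ℝ ℝ).prodMap
    ((exp (-c) • ContinuousLinearMap.id ℝ ℝ).prodMap (ContinuousLinearMap.id ℝ ℝ))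

theorem solTranslationDeriv_apply (c : ℝ) (v : ℝ × ℝ × ℝ) :
    solTranslationDeriv c v = (exp c * v.1, exp (-c) * v.2.1, v.2.2) :=
  rfl

theorem hasFDerivAt_solTranslation (a b c : ℝ) (q : ℝ × ℝ × ℝ) :
    HasFDerivAt (fun v : ℝ × ℝ × ℝ => (a + exp c * v.1, b + exp (-c) * v.2.1, c + v.2.2))
      (solTranslationDeriv c) q :=
  ((solTranslationDeriv c).hasFDerivAt.const_add (a, b, c) :)

theorem sol_momenta_left_invariant_general (a b c : ℝ)
    (L : ℝ × ℝ × ℝ → ℝ × ℝ × ℝ)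
    (hL : L = fun v : ℝ × ℝ × ℝ =>
      ((a + Real.exp c * v.1, b + Real.exp (-c) * v.2.1, c + v.2.2) : ℝ × ℝ × ℝ))
    (q : ℝ × ℝ × ℝ) (p : (ℝ × ℝ × ℝ) →L[ℝ] ℝ)
    (B : (ℝ × ℝ × ℝ) →L[ℝ] (ℝ × ℝ × ℝ))
    (hB₂ : B.comp (fderiv ℝ L q) = ContinuousLinearMap.id ℝ (ℝ × ℝ × ℝ)) :
    Mx (L q) (p.comp B) = Mx q p ∧
    My (L q) (p.comp B) = My q p ∧
    Mz (L q) (p.comp B) = Mz q p := by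
  subst hL
  rw [(hasFDerivAt_solTranslation a b c q).fderiv] at hB₂
  have hBA : Function.LeftInverse B (solTranslationDeriv c) := DFunLike.congr_fun hB₂
  have eigen (t : ℝ) (ht : t ≠ 0) (v : ℝ × ℝ × ℝ) (hv : solTranslationDeriv c v = t • v) :
      p.comp B v = t⁻¹ * p v := by
    rw [p.comp_apply, hBA.eq_inv_smul_of_apply_eq_smul ht hv, map_smul, smul_eq_mul]
  refine ⟨?_, ?_, ?_⟩
  · rw [Mx, Mx, eigen (exp c) (exp_ne_zero c) _ (by simp [solTranslationDeriv_apply]),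
      ← exp_neg, ← mul_assoc, ← exp_add]
    ring_nf
  · rw [My, My, eigen (exp (-c)) (exp_ne_zero _) _ (by simp [solTranslationDeriv_apply]),
      ← exp_neg, ← mul_assoc, ← exp_add]
    ring_nf
  · rw [Mz, Mz, eigen 1 one_ne_zero _ (by simp [solTranslationDeriv_apply]), inv_one, one_mul]

/-- The functions `M_x(q,p) = e^z·p(e₁)`, `M_y(q,p) = e^{-z}·p(e₂)`, `M_z(q,p) = p(e₃)`
on the cotangent bundle `T*ℝ³ = ℝ³ × (ℝ³ →L[ℝ] ℝ)` are invariant under the cotangent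
lift `(q,p) ↦ (L_g q, p ∘ (D L_g(q))⁻¹)` of the Sol left translation
`L_g(x,y,z) = (a + e^c·x, b + e^{-c}·y, c + z)`, where `B` denotes the two-sided inverse
of the Fréchet derivative `D L_g(q) = fderiv ℝ L_g q`. -/
theorem sol_momenta_left_invariant (a b c : ℝ)
    (L : ℝ × ℝ × ℝ → ℝ × ℝ × ℝ)
    (hL : L = fun v : ℝ × ℝ × ℝ =>
      ((a + Real.exp c * v.1, b + Real.exp (-c) * v.2.1, c + v.2.2) : ℝ × ℝ × ℝ))
    (q : ℝ × ℝ × ℝ) (p : (ℝ × ℝ × ℝ) →L[ℝ] ℝ)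
    (B : (ℝ × ℝ × ℝ) →L[ℝ] (ℝ × ℝ × ℝ))
    (hB₁ : (fderiv ℝ L q).comp B = ContinuousLinearMap.id ℝ (ℝ × ℝ × ℝ))
    (hB₂ : B.comp (fderiv ℝ L q) = ContinuousLinearMap.id ℝ (ℝ × ℝ × ℝ)) :
    Mx (L q) (p.comp B) = Mx q p ∧
    My (L q) (p.comp B) = My q p ∧
    Mz (L q) (p.comp B) = Mz q p :=
  sol_momenta_left_invariant_general a b c L hL q p B hB₂
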